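/- The complete homogeneous symmetric polynomial in the Jucys–Murphy elements expands as h_k(J_2,...,J_L) = Σ over sequences of transpositions (τ_1,...,τ_k) with weakly increasing maxima (max τ_1 ≤ max τ_2 ≤ ... ≤ max τ_k) of the product τ_1 τ_2 ⋯ τ_k in ℚ[S_L]. -/

import Mathlib

/-!
Expanding `J_{b_1} ⋯ J_{b_k}` gives the sum of `τ_1 ⋯ τ_k` over all transposition sequences
with `max τ_j = b_j`. Multisets of size `k` correspond to weakly increasing sequences `b`, and
since `J_1 = 0` (index `0 : Fin (n + 1)`), sequences through the first index contribute nothing;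
so both sides equal the sum of `J_{b_1} ⋯ J_{b_k}` over all weakly increasing `b`.
-/

/-- The Jucys–Murphy element `J_k = ∑_{i<k} (i k)` in `ℚ[S_L]`. -/
noncomputable def jucysMurphy (L : ℕ) (k : Fin L) :
    MonoidAlgebra ℚ (Equiv.Perm (Fin L)) :=
  ∑ i ∈ Finset.univ.filter (· < k),
    MonoidAlgebra.of ℚ (Equiv.Perm (Fin L)) (Equiv.swap i k)

open Finset

theorem List.prod_ofFn_sum {R α : Type*} [NonAssocSemiring R] :
    ∀ {k : ℕ} (S : Fin k → Finset α) (g : Fin k → α → R),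
      (List.ofFn fun j => ∑ a ∈ S j, g j a).prod =
        ∑ a ∈ Fintype.piFinset S, (List.ofFn fun j => g j (a j)).prod
  | 0, _, _ => by simp
  | k + 1, S, g => by
    have hpi : Fintype.piFinset S =
        (S 0 ×ˢ Fintype.piFinset (Fin.tail S)).map (Fin.consEquiv fun _ => α).toEmbedding := by
      simpa using filter_piFinset_eq_map_consEquiv S fun _ => True
    rw [List.ofFn_succ, List.prod_cons, List.prod_ofFn_sum, sum_mul_sum, hpi, sum_map,
      sum_product]
    simp only [Fin.consEquiv, Function.Embedding.coeFn_mk, Equiv.coe_fn_mk, List.ofFn_succ,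
      Fin.cons_zero, Fin.cons_succ, List.prod_cons]
    rfl

theorem Multiset.sort_ofFn_of_monotone {α : Type*} [LinearOrder α] {k : ℕ} {b : Fin k → α}
    (hb : Monotone b) : (List.ofFn b : Multiset α).sort (· ≤ ·) = List.ofFn b :=
  List.mergeSort_eq_self _ (List.sortedLE_ofFn_iff.mpr hb).pairwise

theorem Finset.sum_sym_univ_eq_sum_monotone {α M : Type*} [LinearOrder α] [Fintype α]
    [AddCommMonoid M] (k : ℕ) (F : List α → M) :
    ∑ m ∈ (univ : Finset α).sym k, F ((m : Multiset α).sort (· ≤ ·)) =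
      ∑ b ∈ univ.filter (fun b : Fin k → α => Monotone b), F (List.ofFn b) := by
  symm
  refine sum_bij (fun b _ => ⟨List.ofFn b, by simp⟩)
    (fun _ _ => mem_sym_iff.mpr fun _ _ => mem_univ _) ?_ ?_ ?_
  · intro b₁ hb₁ b₂ hb₂ h
    have hsorted₁ := List.sortedLE_ofFn_iff.mpr (mem_filter.mp hb₁).2
    have hsorted₂ := List.sortedLE_ofFn_iff.mpr (mem_filter.mp hb₂).2
    exact List.ofFn_injective <| List.Perm.eq_of_sortedLE hsorted₁ hsorted₂ <|
      Multiset.coe_eq_coe.mp <| congrArg Sym.toMultiset h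
  · intro m _
    set l := (m : Multiset α).sort (· ≤ ·)
    have hlen : l.length = k := by simp [l]
    have hl : List.ofFn (fun j : Fin k => l[j.cast hlen.symm]) = l :=
      List.ext_getElem (by simp [hlen]) (by simp)
    refine ⟨fun j => l[j.cast hlen.symm], ?_, Sym.ext ?_⟩
    · rw [mem_filter, ← List.sortedLE_ofFn_iff, hl]
      exact ⟨mem_univ _, (Multiset.pairwise_sort _ _).sortedLE⟩
    · rw [Sym.coe_mk, hl, Multiset.sort_eq]
  · intro b hb
    rw [Sym.coe_mk, Multiset.sort_ofFn_of_monotone (mem_filter.mp hb).2]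

theorem Finset.sum_filter_monotone_fin_succ {M : Type*} [AddCommMonoid M] {k n : ℕ}
    (g : (Fin k → Fin (n + 1)) → M) (hg : ∀ b, (∃ j, b j = 0) → g b = 0) :
    ∑ b ∈ univ.filter (fun b : Fin k → Fin (n + 1) => Monotone b), g b =
      ∑ b ∈ univ.filter (fun b : Fin k → Fin n => Monotone b), g (Fin.succ ∘ b) := by
  symm
  refine sum_bij_ne_zero (fun b _ _ => Fin.succ ∘ b) ?_ ?_ ?_ (fun _ _ _ => rfl)
  · intro b hb _
    simp only [mem_filter, mem_univ, true_and] at hb ⊢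
    exact Fin.strictMono_succ.monotone.comp hb
  · intro b₁ _ _ b₂ _ _ h
    exact funext fun j => Fin.succ_injective _ (congrFun h j)
  · intro b hb hgb
    have hne : ∀ j, b j ≠ 0 := fun j hj => hgb (hg b ⟨j, hj⟩)
    have hsucc : Fin.succ ∘ (fun j => (b j).pred (hne j)) = b := funext fun j => Fin.succ_pred _ _
    refine ⟨fun j => (b j).pred (hne j), ?_, by rwa [hsucc], hsucc⟩
    simp only [mem_filter, mem_univ, true_and] at hb ⊢
    exact fun i j hij => Fin.pred_le_pred_iff.mpr (hb hij)

theorem jucysMurphy_zero (n : ℕ) : jucysMurphy (n + 1) 0 = 0 := by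
  simp [jucysMurphy]

theorem prod_ofFn_jucysMurphy {L k : ℕ} (b : Fin k → Fin L) :
    (List.ofFn fun j => jucysMurphy L (b j)).prod =
      ∑ a ∈ Fintype.piFinset (fun j => univ.filter (· < b j)),
        MonoidAlgebra.of ℚ (Equiv.Perm (Fin L))
          (List.ofFn fun j => Equiv.swap (a j) (b j)).prod := by
  simp only [jucysMurphy, List.prod_ofFn_sum, map_list_prod, List.map_ofFn]
  rfl

theorem sum_prod_swap_eq_sum_prod_jucysMurphy (L k : ℕ) :
    ∑ t ∈ univ.filter (fun t : Fin k → Fin L × Fin L =>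
          (∀ j, (t j).1 < (t j).2) ∧ Monotone fun j => (t j).2),
        MonoidAlgebra.of ℚ (Equiv.Perm (Fin L))
          (List.ofFn fun j => Equiv.swap (t j).1 (t j).2).prod =
      ∑ b ∈ univ.filter (fun b : Fin k → Fin L => Monotone b),
        (List.ofFn fun j => jucysMurphy L (b j)).prod := by
  simp_rw [prod_ofFn_jucysMurphy]
  rw [sum_sigma']
  refine sum_nbij' (fun t => ⟨fun j => (t j).2, fun j => (t j).1⟩) (fun p j => (p.2 j, p.1 j))
    ?_ ?_ (fun _ _ => rfl) (fun _ _ => rfl) (fun _ _ => rfl)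
  · intro t ht
    simpa [and_comm] using ht
  · intro p hp
    simpa [and_comm] using hp

/-- `h_k(J_2,…,J_L)` (with `L = n + 1`; the `n` variables are `J_2,…,J_L`), i.e. the complete
homogeneous symmetric polynomial of degree `k` in the Jucys–Murphy elements (the sum over all
multisets of `k` variables, products taken in increasing index order), equals the sum, over all
sequences `(τ_1,…,τ_k)` of transpositions with weakly increasing maxima
`max τ_1 ≤ ⋯ ≤ max τ_k`, of the product `τ_1 τ_2 ⋯ τ_k` in `ℚ[S_L]`.
A transposition is encoded as an ordered pair `(a, b)` with `a < b`, so `max τ = b`. -/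
theorem stmt11 (n k : ℕ) :
    ∑ m ∈ (Finset.univ : Finset (Fin n)).sym k,
        (((m : Multiset (Fin n)).sort (· ≤ ·)).map fun i => jucysMurphy (n + 1) i.succ).prod =
      ∑ t ∈ Finset.univ.filter (fun t : Fin k → Fin (n + 1) × Fin (n + 1) =>
            (∀ j, (t j).1 < (t j).2) ∧ Monotone fun j => (t j).2),
        MonoidAlgebra.of ℚ (Equiv.Perm (Fin (n + 1)))
          (List.ofFn fun j => Equiv.swap (t j).1 (t j).2).prod := by
  rw [sum_prod_swap_eq_sum_prod_jucysMurphy, sum_filter_monotone_fin_succ]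
  · have h := sum_sym_univ_eq_sum_monotone k
      fun l : List (Fin n) => (l.map fun i => jucysMurphy (n + 1) i.succ).prod
    simp only [List.map_ofFn] at h
    exact h
  · rintro b ⟨j, hj⟩
    exact List.prod_eq_zero (List.mem_ofFn.mpr ⟨j, by rw [hj, jucysMurphy_zero]⟩)
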